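/- Let H be a real Hilbert space, k ∈ W^{1,1}(0,T) nonnegative and nonincreasing, and φ : [0,T] → H bounded and measurable. Then for almost all t ∈ [0,T], ⟨φ(t), d/dt(k*φ)(t)⟩ ≥ (1/2) d/dt (k * ‖φ‖²)(t) + (1/2) k(t)‖φ(t)‖². -/

import Mathlib

/-!
Extend `k` from `[0, T]` to a nonincreasing function on `ℝ` and fix `t`, `a = φ t`. Polarization,
`2⟪a, φ s⟫ - ‖φ s‖² = ‖a‖² - ‖φ s - a‖²`, rewrites `2⟪a, k*φ⟫ - k*‖φ‖²` as
`‖a‖² ∫₀^τ k - k*‖φ - a‖²`. As `k` is nonincreasing and `‖φ - a‖² ≥ 0`, the increment of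
`k*‖φ - a‖²` over `[t, t + h]` is at most `k 0 ∫ₜ^{t+h} ‖φ s - a‖² ds`, which is `o(h)` when `t` is
a Lebesgue point of `φ`. Hence the derivative of `k*‖φ - a‖²` at `t` is `≤ 0`; at the (all but
countably many) points where `k` is continuous this is the claimed inequality.
-/

open MeasureTheory intervalIntegral Filter Topology Set

noncomputable def volterraConv {E : Type*} [NormedAddCommGroup E] [NormedSpace ℝ E]
    (k : ℝ → ℝ) (f : ℝ → E) (τ : ℝ) : E :=
  ∫ s in (0 : ℝ)..τ, k (τ - s) • f s

theorem intervalIntegrable_of_norm_le {E : Type*} [NormedAddCommGroup E] {f : ℝ → E}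
    (hf : AEStronglyMeasurable f volume) {C : ℝ} (hfC : ∀ s, ‖f s‖ ≤ C) (a b : ℝ) :
    IntervalIntegrable f volume a b :=
  intervalIntegrable_iff.2 <| .of_bound measure_Ioc_lt_top hf.restrict C (ae_of_all _ hfC)

namespace Antitone

variable {k : ℝ → ℝ} (hk : Antitone k)
include hk

theorem intervalIntegrable_comp_sub (τ a b : ℝ) :
    IntervalIntegrable (fun s => k (τ - s)) volume a b :=
  Monotone.intervalIntegrable fun _ _ h => hk (sub_le_sub_left h τ)

theorem intervalIntegrable_comp_sub_smul {E : Type*} [NormedAddCommGroup E] [NormedSpace ℝ E]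
    {f : ℝ → E} (hf : AEStronglyMeasurable f volume) {C : ℝ} (hfC : ∀ s, ‖f s‖ ≤ C)
    (τ a b : ℝ) : IntervalIntegrable (fun s => k (τ - s) • f s) volume a b := by
  rw [intervalIntegrable_iff]
  exact (hk.intervalIntegrable_comp_sub τ a b).def'.smul_of_top_left
    (memLp_top_of_bound hf.restrict C (ae_of_all _ hfC))

theorem volterraConv_add_sub_le {w : ℝ → ℝ} (hw : AEStronglyMeasurable w volume)
    (hw0 : ∀ s, 0 ≤ w s) {C : ℝ} (hwC : ∀ s, ‖w s‖ ≤ C) {t h : ℝ} (ht : 0 ≤ t) (hh : 0 ≤ h) :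
    volterraConv k w (t + h) - volterraConv k w t ≤ k 0 * ∫ s in t..t + h, w s := by
  have hint := hk.intervalIntegrable_comp_sub_smul hw hwC
  have hsplit := integral_add_adjacent_intervals (hint (t + h) 0 t) (hint (t + h) t (t + h))
  have hold : ∫ s in (0:ℝ)..t, k (t + h - s) • w s ≤ volterraConv k w t :=
    integral_mono_on ht (hint _ _ _) (hint _ _ _) fun s _ =>
      mul_le_mul_of_nonneg_right (hk (by linarith)) (hw0 s)
  have hnew : ∫ s in t..t + h, k (t + h - s) • w s ≤ ∫ s in t..t + h, k 0 * w s :=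
    integral_mono_on (by linarith) (hint _ _ _)
      ((intervalIntegrable_of_norm_le hw hwC _ _).const_mul _) fun s hs =>
      mul_le_mul_of_nonneg_right (hk (by linarith [hs.2])) (hw0 s)
  rw [intervalIntegral.integral_const_mul] at hnew
  unfold volterraConv at hold ⊢
  linarith

theorem volterraConv_norm_sub_sq {H : Type*} [NormedAddCommGroup H] [InnerProductSpace ℝ H]
    [CompleteSpace H] {φ : ℝ → H} (hφ : AEStronglyMeasurable φ volume) {M : ℝ}
    (hφM : ∀ s, ‖φ s‖ ≤ M) (a : H) (τ : ℝ) :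
    volterraConv k (fun s => ‖φ s - a‖ ^ 2) τ
      = ‖a‖ ^ 2 * (∫ s in (0:ℝ)..τ, k s) - 2 * inner ℝ a (volterraConv k φ τ)
        + volterraConv k (fun s => ‖φ s‖ ^ 2) τ := by
  have hsq : ∀ s, ‖‖φ s‖ ^ 2‖ ≤ M ^ 2 := fun s => by
    rw [norm_pow, norm_norm]; exact pow_le_pow_left₀ (norm_nonneg _) (hφM s) 2
  have hφint := hk.intervalIntegrable_comp_sub_smul hφ hφM τ 0 τ
  have hsqint : IntervalIntegrable (fun s => k (τ - s) • ‖φ s‖ ^ 2) volume 0 τ :=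
    hk.intervalIntegrable_comp_sub_smul (hφ.norm.pow 2) hsq τ 0 τ
  have hkint := hk.intervalIntegrable_comp_sub τ 0 τ
  have hinnerint : IntervalIntegrable (fun s => inner ℝ a (k (τ - s) • φ s)) volume 0 τ :=
    ⟨hφint.1.const_inner a, hφint.2.const_inner a⟩
  have hinner : ∫ s in (0:ℝ)..τ, inner ℝ a (k (τ - s) • φ s)
      = inner ℝ a (volterraConv k φ τ) :=
    (innerSL ℝ a).intervalIntegral_comp_comm hφint
  have hkernel : ∫ s in (0:ℝ)..τ, k (τ - s) = ∫ s in (0:ℝ)..τ, k s := by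
    simp [integral_comp_sub_left]
  have hpointwise : ∀ s, k (τ - s) • ‖φ s - a‖ ^ 2 = ‖a‖ ^ 2 * k (τ - s)
      - 2 * inner ℝ a (k (τ - s) • φ s) + k (τ - s) • ‖φ s‖ ^ 2 := fun s => by
    rw [norm_sub_sq_real, real_inner_smul_right, real_inner_comm, smul_eq_mul, smul_eq_mul]
    ring
  unfold volterraConv
  simp_rw [hpointwise]
  rw [integral_add ((hkint.const_mul _).sub (hinnerint.const_mul _)) hsqint,
    integral_sub (hkint.const_mul _) (hinnerint.const_mul _),
    intervalIntegral.integral_const_mul, intervalIntegral.integral_const_mul, hkernel, hinner]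
  rfl

end Antitone

theorem volterraConv_congr {E : Type*} [NormedAddCommGroup E] [NormedSpace ℝ E] {f : ℝ → E}
    {k₁ k₂ : ℝ → ℝ} {T τ : ℝ} (h : EqOn k₁ k₂ (Icc 0 T)) (hτ : τ ∈ Icc 0 T) :
    volterraConv k₁ f τ = volterraConv k₂ f τ := by
  refine integral_congr fun s hs => ?_
  rw [uIcc_of_le hτ.1] at hs
  simp only [h ⟨sub_nonneg.2 hs.2, by linarith [hs.1, hτ.2]⟩]

theorem ae_tendsto_inv_mul_integral_norm_sub {E : Type*} [NormedAddCommGroup E] {f : ℝ → E}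
    (hf : LocallyIntegrable f volume) :
    ∀ᵐ t, Tendsto (fun h => h⁻¹ * ∫ s in t..t + h, ‖f s - f t‖) (𝓝[>] 0) (𝓝 0) := by
  filter_upwards [IsUnifLocDoublingMeasure.ae_tendsto_average_norm_sub (μ := volume) hf 1]
    with t ht
  have hhalf : Tendsto (fun h : ℝ => h / 2) (𝓝[>] 0) (𝓝[>] 0) :=
    tendsto_nhdsWithin_iff.2
      ⟨((continuous_id.div_const (2:ℝ)).tendsto' 0 0 (zero_div 2)).mono_left nhdsWithin_le_nhds,
        eventually_nhdsWithin_of_forall fun h (hh : 0 < h) => half_pos hh⟩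
  -- the closed ball of radius `h / 2` around `t + h / 2` is `[t, t + h]`
  refine (ht (fun h => t + h / 2) (fun h => h / 2) hhalf
    (eventually_nhdsWithin_of_forall fun h (hh : 0 < h) => ?_)).congr' ?_
  · rw [Real.closedBall_eq_Icc]; constructor <;> linarith
  · filter_upwards [self_mem_nhdsWithin] with h (hh : 0 < h)
    rw [Real.closedBall_eq_Icc, show t + h / 2 - h / 2 = t by ring,
      show t + h / 2 + h / 2 = t + h by ring, setAverage_eq,
      Real.volume_real_Icc_of_le (by linarith), integral_Icc_eq_integral_Ioc,
      ← integral_of_le (by linarith), add_sub_cancel_left, smul_eq_mul]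

theorem tendsto_inv_mul_integral_norm_sub_sq {E : Type*} [NormedAddCommGroup E] {f : ℝ → E}
    (hf : AEStronglyMeasurable f volume) {M : ℝ} (hfM : ∀ s, ‖f s‖ ≤ M) {t : ℝ}
    (ht : Tendsto (fun h => h⁻¹ * ∫ s in t..t + h, ‖f s - f t‖) (𝓝[>] 0) (𝓝 0)) :
    Tendsto (fun h => h⁻¹ * ∫ s in t..t + h, ‖f s - f t‖ ^ 2) (𝓝[>] 0) (𝓝 0) := by
  have hdist : ∀ s, ‖f s - f t‖ ≤ 2 * M := fun s =>
    (norm_sub_le _ _).trans (by linarith [hfM s, hfM t])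
  have hint : ∀ a b, IntervalIntegrable (fun s => ‖f s - f t‖) volume a b :=
    intervalIntegrable_of_norm_le (hf.sub aestronglyMeasurable_const).norm
      fun s => by rw [norm_norm]; exact hdist s
  have hsqint : ∀ a b, IntervalIntegrable (fun s => ‖f s - f t‖ ^ 2) volume a b :=
    intervalIntegrable_of_norm_le ((hf.sub aestronglyMeasurable_const).norm.pow 2) fun s => by
      rw [norm_pow, norm_norm]; exact pow_le_pow_left₀ (norm_nonneg _) (hdist s) 2
  refine tendsto_of_tendsto_of_tendsto_of_le_of_le' tendsto_const_nhds
    (by simpa using ht.const_mul (2 * M)) ?_ ?_ <;>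
    filter_upwards [self_mem_nhdsWithin] with h (hh : 0 < h)
  · exact mul_nonneg (inv_nonneg.2 hh.le) (integral_nonneg (by linarith) fun s _ => by positivity)
  · rw [mul_left_comm (2 * M), ← intervalIntegral.integral_const_mul (2 * M)]
    refine mul_le_mul_of_nonneg_left (integral_mono_on (by linarith) (hsqint _ _)
      ((hint _ _).const_mul _) fun s _ => ?_) (inv_nonneg.2 hh.le)
    rw [sq]; exact mul_le_mul_of_nonneg_right (hdist s) (norm_nonneg _)

theorem HasDerivAt.nonpos_of_sub_le {V e : ℝ → ℝ} {d t : ℝ} (hV : HasDerivAt V d t)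
    (he : Tendsto (fun h => h⁻¹ * e h) (𝓝[>] 0) (𝓝 0)) (hVe : ∀ h > 0, V (t + h) - V t ≤ e h) :
    d ≤ 0 :=
  le_of_tendsto_of_tendsto hV.tendsto_slope_zero_right he <|
    eventually_nhdsWithin_of_forall fun h (hh : 0 < h) =>
      mul_le_mul_of_nonneg_left (hVe h hh) (inv_nonneg.2 hh.le)

theorem Antitone.le_inner_of_hasDerivAt_volterraConv {H : Type*} [NormedAddCommGroup H]
    [InnerProductSpace ℝ H] [CompleteSpace H] {k : ℝ → ℝ} (hk : Antitone k) {φ : ℝ → H}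
    (hφ : AEStronglyMeasurable φ volume) {M : ℝ} (hφM : ∀ s, ‖φ s‖ ≤ M) {t : ℝ} (ht : 0 ≤ t)
    (hkt : ContinuousAt k t)
    (hφt : Tendsto (fun h => h⁻¹ * ∫ s in t..t + h, ‖φ s - φ t‖ ^ 2) (𝓝[>] 0) (𝓝 0))
    {D : H} {D₂ : ℝ} (hD : HasDerivAt (volterraConv k φ) D t)
    (hD₂ : HasDerivAt (volterraConv k fun s => ‖φ s‖ ^ 2) D₂ t) :
    1 / 2 * D₂ + 1 / 2 * k t * ‖φ t‖ ^ 2 ≤ inner ℝ (φ t) D := by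
  set a := φ t
  have hK : HasDerivAt (fun τ => ∫ s in (0:ℝ)..τ, k s) (k t) t :=
    integral_hasDerivAt_right hk.intervalIntegrable
      hk.measurable.stronglyMeasurable.stronglyMeasurableAtFilter hkt
  have hV : HasDerivAt (volterraConv k fun s => ‖φ s - a‖ ^ 2)
      (‖a‖ ^ 2 * k t - 2 * inner ℝ a D + D₂) t := by
    rw [funext (hk.volterraConv_norm_sub_sq hφ hφM a)]
    exact ((hK.const_mul _).sub (((innerSL ℝ a).hasFDerivAt.comp_hasDerivAt t hD).const_mul 2)).add
      hD₂
  have hdist : ∀ s, ‖‖φ s - a‖ ^ 2‖ ≤ (2 * M) ^ 2 := fun s => by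
    rw [norm_pow, norm_norm]
    exact pow_le_pow_left₀ (norm_nonneg _) ((norm_sub_le _ _).trans (by linarith [hφM s, hφM t])) 2
  have hincr : Tendsto (fun h => h⁻¹ * (k 0 * ∫ s in t..t + h, ‖φ s - a‖ ^ 2)) (𝓝[>] 0) (𝓝 0) := by
    simpa [mul_left_comm] using hφt.const_mul (k 0)
  have hVnonpos := hV.nonpos_of_sub_le hincr fun h hh =>
    hk.volterraConv_add_sub_le (w := fun s => ‖φ s - a‖ ^ 2)
      ((hφ.sub aestronglyMeasurable_const).norm.pow 2) (fun s => sq_nonneg _) hdist ht hh.le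
  linarith

theorem convolution_inequality_hilbert_general
    {H : Type*} [NormedAddCommGroup H] [InnerProductSpace ℝ H] [CompleteSpace H]
    (T : ℝ) (hT : 0 < T)
    (k : ℝ → ℝ)
    (hkmono : ∀ s ∈ Set.Icc (0:ℝ) T, ∀ t ∈ Set.Icc (0:ℝ) T, s ≤ t → k t ≤ k s)
    (φ : ℝ → H) (hφm : AEStronglyMeasurable φ volume) (M : ℝ) (hφb : ∀ t, ‖φ t‖ ≤ M)
    -- `D` is the a.e. derivative of `k*φ`, `D₂` that of `k*‖φ‖²`
    (D : ℝ → H) (D₂ : ℝ → ℝ)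
    (hD : ∀ᵐ t ∂(volume.restrict (Set.Icc (0:ℝ) T)),
      HasDerivAt (fun τ => ∫ s in (0:ℝ)..τ, k (τ - s) • φ s) (D t) t)
    (hD₂ : ∀ᵐ t ∂(volume.restrict (Set.Icc (0:ℝ) T)),
      HasDerivAt (fun τ => ∫ s in (0:ℝ)..τ, k (τ - s) * ‖φ s‖ ^ 2) (D₂ t) t) :
    ∀ᵐ t ∂(volume.restrict (Set.Icc (0:ℝ) T)),
      inner ℝ (φ t) (D t) ≥ (1 / 2 : ℝ) * D₂ t + (1 / 2 : ℝ) * k t * ‖φ t‖ ^ 2 := by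
  set kₑ := IccExtend hT.le (domRestrict (Icc 0 T) k)
  have hkₑ : Antitone kₑ := (antitoneOn_iff_antitone.1 hkmono).comp_monotone (monotone_projIcc _)
  have hkₑk : EqOn kₑ k (Icc 0 T) := fun x hx => IccExtend_of_mem _ _ hx
  have hφleb := ae_tendsto_inv_mul_integral_norm_sub
    ((memLp_top_of_bound hφm M (ae_of_all _ hφb)).locallyIntegrable le_top)
  rw [Measure.restrict_congr_set Ioo_ae_eq_Icc.symm] at hD hD₂ ⊢
  filter_upwards [ae_restrict_mem measurableSet_Ioo, hD, hD₂, ae_restrict_of_ae hφleb,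
    ae_restrict_of_ae (hkₑ.countable_not_continuousAt.ae_notMem volume)]
    with t ht hDt hD₂t hφt hkt
  have hnear : ∀ᶠ τ in 𝓝 t, τ ∈ Icc 0 T := Icc_mem_nhds ht.1 ht.2
  rw [ge_iff_le, ← hkₑk (Ioo_subset_Icc_self ht)]
  exact hkₑ.le_inner_of_hasDerivAt_volterraConv hφm hφb ht.1.le (not_not.1 hkt)
    (tendsto_inv_mul_integral_norm_sub_sq hφm hφb hφt)
    (hDt.congr_of_eventuallyEq (hnear.mono fun τ hτ => volterraConv_congr hkₑk hτ))
    (hD₂t.congr_of_eventuallyEq (hnear.mono fun τ hτ => volterraConv_congr hkₑk hτ))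

/-- Hilbert-space version: for `k ∈ W^{1,1}(0,T)` nonnegative and nonincreasing and `φ` bounded
measurable with values in a real Hilbert space, for a.e. `t ∈ [0,T]`:
`⟨φ(t), d/dt(k*φ)(t)⟩ ≥ (1/2) d/dt (k*‖φ‖²)(t) + (1/2) k(t)‖φ(t)‖²`. -/
theorem convolution_inequality_hilbert
    {H : Type*} [NormedAddCommGroup H] [InnerProductSpace ℝ H] [CompleteSpace H]
    (T : ℝ) (hT : 0 < T)
    (k k' : ℝ → ℝ)
    (hk' : IntegrableOn k' (Set.Icc 0 T))
    (hk : ∀ t ∈ Set.Icc (0:ℝ) T, k t = k 0 + ∫ s in (0:ℝ)..t, k' s)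
    (hknonneg : ∀ t ∈ Set.Icc (0:ℝ) T, 0 ≤ k t)
    (hkmono : ∀ s ∈ Set.Icc (0:ℝ) T, ∀ t ∈ Set.Icc (0:ℝ) T, s ≤ t → k t ≤ k s)
    (φ : ℝ → H) (hφm : AEStronglyMeasurable φ volume) (M : ℝ) (hφb : ∀ t, ‖φ t‖ ≤ M)
    -- `D` is the a.e. derivative of `k*φ`, `D₂` that of `k*‖φ‖²`
    (D : ℝ → H) (D₂ : ℝ → ℝ)
    (hD : ∀ᵐ t ∂(volume.restrict (Set.Icc (0:ℝ) T)),
      HasDerivAt (fun τ => ∫ s in (0:ℝ)..τ, k (τ - s) • φ s) (D t) t)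
    (hD₂ : ∀ᵐ t ∂(volume.restrict (Set.Icc (0:ℝ) T)),
      HasDerivAt (fun τ => ∫ s in (0:ℝ)..τ, k (τ - s) * ‖φ s‖ ^ 2) (D₂ t) t) :
    ∀ᵐ t ∂(volume.restrict (Set.Icc (0:ℝ) T)),
      inner ℝ (φ t) (D t) ≥ (1 / 2 : ℝ) * D₂ t + (1 / 2 : ℝ) * k t * ‖φ t‖ ^ 2 :=
  convolution_inequality_hilbert_general T hT k hkmono φ hφm M hφb D D₂ hD hD₂
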